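/- arXiv:1912.05719 — 12 statements merged into one kernel-verified Lean document; each statement's English description precedes it below -/
import Mathlib

section
/- Let K be a field and A an n×n matrix over the polynomial ring K[α₁, α₂] such that every diagonal entry A[i,i] equals α₁, for some fixed k with 1 ≤ k ≤ n−1 every entry A[i,i+k] equals α₂, and all other entries lie in K. Then det(A) = α₁ⁿ + Q(α₁, α₂), where Q ∈ K[α₁, α₂] has total degree at most n−1. -/
/-!
Every entry of `A` has total degree at most one. In the Leibniz expansion of `det A` the identity
contributes `α₁ ^ n`; any other permutation `τ` must pick a constant entry `A (τ i) i`, since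
otherwise `τ i ∈ {i, i - k}` for all `i`, so `τ` never increases an index and is the identity.
Such a term is a product of one constant and `n - 1` factors of degree at most one.
-/

open MvPolynomial

theorem Equiv.Perm.eq_one_of_forall_apply_le {α : Type*} [LinearOrder α] [WellFoundedLT α]
    {σ : Equiv.Perm α} (h : ∀ i, σ i ≤ i) : σ = 1 := by
  ext i
  induction i using WellFoundedLT.induction with
  | _ i ih => exact (h i).eq_or_lt.resolve_right fun hlt => hlt.ne (σ.injective (ih _ hlt))

theorem MvPolynomial.totalDegree_prod_le_card_sub_one {R σ ι : Type*} [CommSemiring R]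
    [Fintype ι] (f : ι → MvPolynomial σ R) (hf : ∀ i, (f i).totalDegree ≤ 1) {i₀ : ι}
    (hi₀ : (f i₀).totalDegree = 0) : (∏ i, f i).totalDegree ≤ Fintype.card ι - 1 := by
  classical
  rw [← Finset.mul_prod_erase _ _ (Finset.mem_univ i₀)]
  calc (f i₀ * ∏ i ∈ Finset.univ.erase i₀, f i).totalDegree
      ≤ (f i₀).totalDegree + ∑ i ∈ Finset.univ.erase i₀, (f i).totalDegree :=
        (totalDegree_mul _ _).trans (add_le_add le_rfl (totalDegree_finsetProd _ _))
    _ ≤ 0 + ∑ _i ∈ Finset.univ.erase i₀, 1 :=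
        add_le_add hi₀.le (Finset.sum_le_sum fun i _ => hf i)
    _ = Fintype.card ι - 1 := by simp [Finset.card_erase_of_mem]

theorem Matrix.totalDegree_det_sub_prod_diag_le {R σ n : Type*} [CommRing R] [Fintype n]
    [DecidableEq n] (A : Matrix n n (MvPolynomial σ R)) (hA : ∀ i j, (A i j).totalDegree ≤ 1)
    (hperm : ∀ τ : Equiv.Perm n, τ ≠ 1 → ∃ i, (A (τ i) i).totalDegree = 0) :
    (A.det - ∏ i, A i i).totalDegree ≤ Fintype.card n - 1 := by
  have hdet : A.det - ∏ i, A i i =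
      ∑ τ ∈ Finset.univ.erase 1, Equiv.Perm.sign τ • ∏ i, A (τ i) i := by
    rw [Matrix.det_apply, ← Finset.add_sum_erase _ _ (Finset.mem_univ 1)]
    simp
  rw [hdet]
  refine (totalDegree_finsetSum _ _).trans (Finset.sup_le fun τ hτ => ?_)
  obtain ⟨i₀, hi₀⟩ := hperm τ (Finset.ne_of_mem_erase hτ)
  exact (totalDegree_smul_le _ _).trans (totalDegree_prod_le_card_sub_one _ (fun i => hA _ _) hi₀)

theorem stmt0_general (K : Type*) [Field K] (n k : ℕ)
    (A : Matrix (Fin n) (Fin n) (MvPolynomial (Fin 2) K))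
    (hdiag : ∀ i, A i i = X 0)
    (hsuper : ∀ i j : Fin n, (j : ℕ) = (i : ℕ) + k → A i j = X 1)
    (hconst : ∀ i j : Fin n, (j : ℕ) ≠ (i : ℕ) → (j : ℕ) ≠ (i : ℕ) + k →
      ∃ c : K, A i j = C c) :
    ∃ Q : MvPolynomial (Fin 2) K,
      A.det = (X 0) ^ n + Q ∧ Q.totalDegree ≤ n - 1 := by
  have hdeg : ∀ i j, (A i j).totalDegree ≤ 1 := by
    intro i j
    by_cases hij : (j : ℕ) = i
    · rw [Fin.ext hij, hdiag, totalDegree_X]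
    by_cases hk : (j : ℕ) = i + k
    · rw [hsuper i j hk, totalDegree_X]
    obtain ⟨c, hc⟩ := hconst i j hij hk
    simp [hc]
  have hperm : ∀ τ : Equiv.Perm (Fin n), τ ≠ 1 → ∃ i, (A (τ i) i).totalDegree = 0 := by
    intro τ hτ
    obtain ⟨i, hi, hik⟩ : ∃ i : Fin n, (i : ℕ) ≠ τ i ∧ (i : ℕ) ≠ τ i + k := by
      by_contra! h
      exact hτ (Equiv.Perm.eq_one_of_forall_apply_le fun i => by have := h i; omega)
    obtain ⟨c, hc⟩ := hconst (τ i) i hi hik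
    exact ⟨i, by rw [hc, totalDegree_C]⟩
  refine ⟨A.det - X 0 ^ n, by ring, ?_⟩
  simpa [hdiag] using A.totalDegree_det_sub_prod_diag_le hdeg hperm

/-- Pham-type diagonal lemma: an `n × n` matrix over `K[α₁, α₂]` with `α₁` on the
diagonal, `α₂` on a fixed `k`-th superdiagonal, and constants from `K` elsewhere,
has determinant `α₁ ^ n + Q` with `Q` of total degree at most `n - 1`. -/
theorem stmt0 (K : Type*) [Field K] (n k : ℕ) (hk1 : 1 ≤ k) (hkn : k ≤ n - 1)
    (A : Matrix (Fin n) (Fin n) (MvPolynomial (Fin 2) K))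
    (hdiag : ∀ i, A i i = X 0)
    (hsuper : ∀ i j : Fin n, (j : ℕ) = (i : ℕ) + k → A i j = X 1)
    (hconst : ∀ i j : Fin n, (j : ℕ) ≠ (i : ℕ) → (j : ℕ) ≠ (i : ℕ) + k →
      ∃ c : K, A i j = C c) :
    ∃ Q : MvPolynomial (Fin 2) K,
      A.det = (X 0) ^ n + Q ∧ Q.totalDegree ≤ n - 1 :=
  stmt0_general K n k A hdiag hsuper hconst
end

section
/- Let K be an algebraically closed field and Q₁, Q₂ ∈ K[α₁, α₂] with total degrees deg(Q₁) ≤ n₁ − 1 and deg(Q₂) ≤ n₂ − 1. Then the system α₁^{n₁} + Q₁(α₁, α₂) = 0, α₂^{n₂} + Q₂(α₁, α₂) = 0 has at most n₁·n₂ solutions in K². -/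
open MvPolynomial

private lemma pham_key (K : Type*) [Field K] (n₁ n₂ : ℕ)
    (hn₁ : 1 ≤ n₁) (hn₂ : 1 ≤ n₂)
    (Q₁ Q₂ : MvPolynomial (Fin 2) K)
    (hQ₁ : Q₁.totalDegree ≤ n₁ - 1) (hQ₂ : Q₂.totalDegree ≤ n₂ - 1)
    (t : Finset (K × K))
    (ht : ∀ p ∈ t, p.1 ^ n₁ + eval ![p.1, p.2] Q₁ = 0 ∧
        p.2 ^ n₂ + eval ![p.1, p.2] Q₂ = 0) :
    t.card ≤ n₁ * n₂ := by
  classical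
  set P₁ : MvPolynomial (Fin 2) K := X 0 ^ n₁ + Q₁ with hP₁def
  set P₂ : MvPolynomial (Fin 2) K := X 1 ^ n₂ + Q₂ with hP₂def
  set I : Ideal (MvPolynomial (Fin 2) K) := Ideal.span {P₁, P₂} with hIdef
  set A := MvPolynomial (Fin 2) K ⧸ I with hAdef
  set π : MvPolynomial (Fin 2) K →ₐ[K] A := Ideal.Quotient.mkₐ K I with hπdef
  have hπ1 : π P₁ = 0 := by
    rw [hπdef, Ideal.Quotient.mkₐ_eq_mk, Ideal.Quotient.eq_zero_iff_mem]
    exact Ideal.subset_span (Set.mem_insert _ _)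
  have hπ2 : π P₂ = 0 := by
    rw [hπdef, Ideal.Quotient.mkₐ_eq_mk, Ideal.Quotient.eq_zero_iff_mem]
    exact Ideal.subset_span (Set.mem_insert_of_mem _ rfl)
  set g : Fin n₁ × Fin n₂ → A := fun ij => π (X 0 ^ (ij.1 : ℕ) * X 1 ^ (ij.2 : ℕ)) with hg
  set M : Submodule K A := Submodule.span K (Set.range g) with hM
  have main : ∀ d : ℕ, (∀ a b : ℕ, a + b ≤ d → π (X 0 ^ a * X 1 ^ b) ∈ M) ∧
      (∀ f : MvPolynomial (Fin 2) K, f.totalDegree ≤ d → π f ∈ M) := by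
    intro d
    induction d using Nat.strong_induction_on with
    | _ d IH =>
    have h1 : ∀ a b : ℕ, a + b ≤ d → π (X 0 ^ a * X 1 ^ b) ∈ M := by
      intro a b hab
      by_cases ha : a < n₁
      · by_cases hb : b < n₂
        · exact Submodule.subset_span ⟨(⟨a, ha⟩, ⟨b, hb⟩), rfl⟩
        · push_neg at hb
          have hsplit : (X 1 : MvPolynomial (Fin 2) K) ^ b = X 1 ^ (b - n₂) * X 1 ^ n₂ := by
            rw [← pow_add, Nat.sub_add_cancel hb]
          have hXn : π (X 1 ^ n₂) = - π Q₂ := by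
            have h : (X 1 : MvPolynomial (Fin 2) K) ^ n₂ = P₂ - Q₂ := by rw [hP₂def]; ring
            rw [h, map_sub, hπ2, zero_sub]
          have hkey : π (X 0 ^ a * X 1 ^ b) = - π (X 0 ^ a * X 1 ^ (b - n₂) * Q₂) := by
            have h : (X 0 : MvPolynomial (Fin 2) K) ^ a * X 1 ^ b = (X 0 ^ a * X 1 ^ (b - n₂)) * X 1 ^ n₂ := by
              rw [hsplit]; ring
            simp only [h, map_mul, hXn]; ring
          have hdeg : (X 0 ^ a * X 1 ^ (b - n₂) * Q₂ : MvPolynomial (Fin 2) K).totalDegree ≤ d - 1 := by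
            have t1 : (X 0 ^ a * X 1 ^ (b - n₂) * Q₂ : MvPolynomial (Fin 2) K).totalDegree
                ≤ (a + (b - n₂)) + (n₂ - 1) := by
              refine le_trans (totalDegree_mul _ _) (add_le_add ?_ hQ₂)
              refine le_trans (totalDegree_mul _ _) ?_
              simp [totalDegree_X_pow]
            exact le_trans t1 (by omega)
          rw [hkey]
          exact Submodule.neg_mem _ ((IH (d - 1) (by omega)).2 _ hdeg)
      · push_neg at ha
        have hsplit : (X 0 : MvPolynomial (Fin 2) K) ^ a = X 0 ^ (a - n₁) * X 0 ^ n₁ := by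
          rw [← pow_add, Nat.sub_add_cancel ha]
        have hXn : π (X 0 ^ n₁) = - π Q₁ := by
          have h : (X 0 : MvPolynomial (Fin 2) K) ^ n₁ = P₁ - Q₁ := by rw [hP₁def]; ring
          rw [h, map_sub, hπ1, zero_sub]
        have hkey : π (X 0 ^ a * X 1 ^ b) = - π (X 0 ^ (a - n₁) * X 1 ^ b * Q₁) := by
          have h : (X 0 : MvPolynomial (Fin 2) K) ^ a * X 1 ^ b = (X 0 ^ (a - n₁) * X 1 ^ b) * X 0 ^ n₁ := by
            rw [hsplit]; ring
          simp only [h, map_mul, hXn]; ring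
        have hdeg : (X 0 ^ (a - n₁) * X 1 ^ b * Q₁ : MvPolynomial (Fin 2) K).totalDegree ≤ d - 1 := by
          have t1 : (X 0 ^ (a - n₁) * X 1 ^ b * Q₁ : MvPolynomial (Fin 2) K).totalDegree
              ≤ ((a - n₁) + b) + (n₁ - 1) := by
            refine le_trans (totalDegree_mul _ _) (add_le_add ?_ hQ₁)
            refine le_trans (totalDegree_mul _ _) ?_
            simp [totalDegree_X_pow]
          exact le_trans t1 (by omega)
        rw [hkey]
        exact Submodule.neg_mem _ ((IH (d - 1) (by omega)).2 _ hdeg)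
    refine ⟨h1, ?_⟩
    intro f hf
    rw [MvPolynomial.as_sum f, map_sum]
    refine Submodule.sum_mem _ ?_
    intro v hv
    have hsum : v 0 + v 1 ≤ d := by
      have h := MvPolynomial.le_totalDegree hv
      have e : v.sum (fun _ e => e) = v 0 + v 1 := by
        rw [Finsupp.sum_fintype _ _ (fun _ => rfl), Fin.sum_univ_two]
      omega
    have hmono : (monomial v (coeff v f) : MvPolynomial (Fin 2) K) = (coeff v f) • (X 0 ^ v 0 * X 1 ^ v 1) := by
      rw [monomial_eq, Finsupp.prod_fintype _ _ (fun _ => pow_zero _), Fin.prod_univ_two,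
        smul_eq_C_mul]
    rw [hmono, map_smul]
    exact Submodule.smul_mem _ _ (h1 _ _ hsum)
  have hspan_top : Submodule.span K (Set.range g) = ⊤ := by
    rw [eq_top_iff]
    rintro x -
    obtain ⟨f, rfl⟩ := Ideal.Quotient.mk_surjective x
    exact (main f.totalDegree).2 f le_rfl
  haveI hfin : Module.Finite K A :=
    ⟨⟨Finset.image g Finset.univ, by
      rw [Finset.coe_image, Finset.coe_univ, Set.image_univ]; exact hspan_top⟩⟩
  have hrank : Module.finrank K A ≤ n₁ * n₂ := by
    have h := finrank_range_le_card (R := K) g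
    rw [Set.finrank, hspan_top, finrank_top] at h
    simpa using h
  -- evaluation algebra homomorphisms
  have hker : ∀ p : {x // x ∈ t}, ∀ f ∈ I, aeval ![(p : K × K).1, (p : K × K).2] f = 0 := by
    intro p f hf
    have hsub : I ≤ RingHom.ker (aeval ![(p : K × K).1, (p : K × K).2] : MvPolynomial (Fin 2) K →ₐ[K] K) := by
      rw [hIdef, Ideal.span_le]
      rintro q hq
      simp only [Set.mem_insert_iff, Set.mem_singleton_iff] at hq
      obtain ⟨h1, h2⟩ := ht p p.2
      rcases hq with rfl | rfl
      · simp only [SetLike.mem_coe, RingHom.mem_ker, hP₁def, map_add, map_pow, aeval_X,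
          Matrix.cons_val_zero]
        have : (aeval ![(p : K × K).1, (p : K × K).2]) Q₁
            = eval ![(p : K × K).1, (p : K × K).2] Q₁ := by
          rw [← coe_aeval_eq_eval]; rfl
        rw [this]
        exact h1
      · simp only [SetLike.mem_coe, RingHom.mem_ker, hP₂def, map_add, map_pow, aeval_X,
          Matrix.cons_val_one, Matrix.head_cons]
        have : (aeval ![(p : K × K).1, (p : K × K).2]) Q₂
            = eval ![(p : K × K).1, (p : K × K).2] Q₂ := by
          rw [← coe_aeval_eq_eval]; rfl
        rw [this]
        exact h2
    exact hsub hf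
  set E : {x // x ∈ t} → (A →ₐ[K] K) :=
    fun p => Ideal.Quotient.liftₐ I (aeval ![(p : K × K).1, (p : K × K).2]) (hker p) with hE
  have hEπ : ∀ p (f : MvPolynomial (Fin 2) K), E p (π f) = aeval ![(p : K × K).1, (p : K × K).2] f := by
    intro p f
    rw [hE, hπdef, Ideal.Quotient.mkₐ_eq_mk, Ideal.Quotient.liftₐ_apply]
    rfl
  have hEinj : Function.Injective E := by
    intro p q hpq
    have h0 : E p (π (X 0)) = E q (π (X 0)) := by rw [hpq]
    have h1 : E p (π (X 1)) = E q (π (X 1)) := by rw [hpq]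
    rw [hEπ, hEπ, aeval_X, aeval_X] at h0
    rw [hEπ, hEπ, aeval_X, aeval_X] at h1
    simp only [Matrix.cons_val_zero] at h0
    simp only [Matrix.cons_val_one, Matrix.head_cons] at h1
    exact Subtype.ext (Prod.ext h0 h1)
  have hli := (linearIndependent_algHom_toLinearMap' K A K).comp E hEinj
  have hcard := hli.fintype_card_le_finrank
  rw [Fintype.card_coe] at hcard
  calc t.card ≤ Module.finrank K (Module.Dual K A) := hcard
    _ = Module.finrank K A := Subspace.dual_finrank_eq
    _ ≤ n₁ * n₂ := hrank

/-- A Pham system `α₁^{n₁} + Q₁ = 0, α₂^{n₂} + Q₂ = 0` with `deg Qᵢ ≤ nᵢ - 1`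
has at most `n₁ * n₂` solutions over an algebraically closed field. -/
theorem stmt1 (K : Type*) [Field K] [IsAlgClosed K] (n₁ n₂ : ℕ)
    (hn₁ : 1 ≤ n₁) (hn₂ : 1 ≤ n₂)
    (Q₁ Q₂ : MvPolynomial (Fin 2) K)
    (hQ₁ : Q₁.totalDegree ≤ n₁ - 1) (hQ₂ : Q₂.totalDegree ≤ n₂ - 1) :
    {p : K × K |
        p.1 ^ n₁ + eval ![p.1, p.2] Q₁ = 0 ∧
        p.2 ^ n₂ + eval ![p.1, p.2] Q₂ = 0}.Finite ∧
    {p : K × K |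
        p.1 ^ n₁ + eval ![p.1, p.2] Q₁ = 0 ∧
        p.2 ^ n₂ + eval ![p.1, p.2] Q₂ = 0}.ncard ≤ n₁ * n₂ := by
  set S := {p : K × K |
      p.1 ^ n₁ + eval ![p.1, p.2] Q₁ = 0 ∧
      p.2 ^ n₂ + eval ![p.1, p.2] Q₂ = 0} with hS
  have key : ∀ u : Finset (K × K), ↑u ⊆ S → u.card ≤ n₁ * n₂ := by
    intro u hu
    exact pham_key K n₁ n₂ hn₁ hn₂ Q₁ Q₂ hQ₁ hQ₂ u (fun p hp => hu hp)
  have hfin : S.Finite := by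
    by_contra hinf
    obtain ⟨u, hus, huc⟩ := Set.Infinite.exists_subset_card_eq hinf (n₁ * n₂ + 1)
    have := key u hus
    omega
  refine ⟨hfin, ?_⟩
  rw [Set.ncard_eq_toFinset_card S hfin]
  exact key hfin.toFinset (by simp)
end

section
/- Let f(x) = Σ_{j=1}^t c_j x^{δ_j} be a t-sparse polynomial over a field K with distinct exponents δ_j and nonzero coefficients c_j, and let ω ∈ K be nonzero with ω^{δ_j} pairwise distinct. Then the sequence a_i = f(ω^i) (i ≥ 0) is linearly generated by the polynomial Λ(z) = Π_{j=1}^t (z − ω^{δ_j}); that is, for all i ≥ 0, Σ_{k=0}^t λ_k a_{i+k} = 0 where Λ(z) = Σ_{k=0}^t λ_k z^k. -/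
/-!
Each `ω^{δ_j}` is a root of `Λ`, and a geometric sequence `(r^i)` with `Λ(r) = 0` satisfies
`Σ_k λ_k r^{i+k} = r^i Λ(r) = 0`. The sequence `a_i = Σ_j c_j (ω^{δ_j})^i` is a linear combination
of such geometric sequences, so it satisfies the same recurrence.
-/

open Polynomial Finset

namespace Polynomial

theorem isRoot_prod_X_sub_C {R ι : Type*} [CommRing R] {s : Finset ι} (r : ι → R) {j : ι}
    (hj : j ∈ s) :
    (∏ i ∈ s, (X - C (r i))).IsRoot (r j) := by
  rw [IsRoot.def, eval_prod]
  exact prod_eq_zero hj (by simp)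

section CommSemiring

variable {R : Type*} [CommSemiring R]

theorem sum_coeff_mul_pow_add_eq_zero_of_isRoot {p : R[X]} {n : ℕ} (hn : p.natDegree < n)
    {r : R} (hr : p.IsRoot r) (i : ℕ) : ∑ k ∈ range n, p.coeff k * r ^ (i + k) = 0 :=
  calc ∑ k ∈ range n, p.coeff k * r ^ (i + k) = r ^ i * p.eval r := by
        rw [eval_eq_sum_range' hn, mul_sum]
        exact sum_congr rfl fun k _ => by ring
    _ = 0 := by rw [hr.eq_zero, mul_zero]

theorem sum_coeff_mul_sum_pow_add_eq_zero {ι : Type*} (s : Finset ι) (c r : ι → R) {p : R[X]}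
    {n : ℕ} (hn : p.natDegree < n) (hr : ∀ j ∈ s, p.IsRoot (r j)) (i : ℕ) :
    ∑ k ∈ range n, p.coeff k * ∑ j ∈ s, c j * r j ^ (i + k) = 0 :=
  calc ∑ k ∈ range n, p.coeff k * ∑ j ∈ s, c j * r j ^ (i + k)
      = ∑ j ∈ s, c j * ∑ k ∈ range n, p.coeff k * r j ^ (i + k) := by
        simp only [mul_sum]
        rw [sum_comm]
        exact sum_congr rfl fun j _ => sum_congr rfl fun k _ => by ring
    _ = 0 := sum_eq_zero fun j hj => by
        rw [sum_coeff_mul_pow_add_eq_zero_of_isRoot hn (hr j hj), mul_zero]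

end CommSemiring

end Polynomial

theorem stmt4_general (K : Type*) [Field K] (t : ℕ) (δ : Fin t → ℤ) (c : Fin t → K)
    (ω : K)
    (a : ℕ → K) (ha : ∀ i : ℕ, a i = ∑ j, c j * (ω ^ (δ j)) ^ i)
    (Λ : K[X]) (hΛ : Λ = ∏ j, (X - C (ω ^ (δ j)))) :
    ∀ i : ℕ, ∑ k ∈ range (t + 1), Λ.coeff k * a (i + k) = 0 := by
  have hdeg : Λ.natDegree < t + 1 := by simp [hΛ]
  intro i
  simp only [ha]
  exact sum_coeff_mul_sum_pow_add_eq_zero univ c (fun j => ω ^ δ j) hdeg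
    (fun j hj => hΛ ▸ isRoot_prod_X_sub_C _ hj) i

/-- The sequence of evaluations `a_i = f(ω^i)` of a `t`-sparse (Laurent) polynomial
`f = Σ c_j x^{δ_j}` is linearly generated by `Λ(z) = Π_j (z - ω^{δ_j})`. -/
theorem stmt4 (K : Type*) [Field K] (t : ℕ) (δ : Fin t → ℤ) (c : Fin t → K)
    (hc : ∀ j, c j ≠ 0) (hδ : Function.Injective δ) (ω : K) (hω : ω ≠ 0)
    (hdist : Function.Injective fun j => ω ^ (δ j))
    (a : ℕ → K) (ha : ∀ i : ℕ, a i = ∑ j, c j * (ω ^ (δ j)) ^ i)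
    (Λ : K[X]) (hΛ : Λ = ∏ j, (X - C (ω ^ (δ j)))) :
    ∀ i : ℕ, ∑ k ∈ range (t + 1), Λ.coeff k * a (i + k) = 0 :=
  stmt4_general K t δ c ω a ha Λ hΛ
end

section
/- Let f(x) = Σ_{j=1}^t c_j x^{δ_j} be a t-sparse polynomial over a field K with all c_j ≠ 0 and the values ρ_j = ω^{δ_j} pairwise distinct for a nonzero ω ∈ K. Then for every r and every m ≥ t, the (m+1)×(m+1) Hankel matrix H with entries H[i,j] = f(ω^{r+i+j}) (0 ≤ i, j ≤ m) is singular, and moreover the infinite Hankel matrix built from (f(ω^{r+i}))_{i≥0} has rank exactly t. -/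
/-!
Writing `ρ_k = ω^{δ_k}`, the Hankel matrix factors as `Vᵀ D V` with `V = (ρ_k^j)` a rectangular
Vandermonde matrix with `t` rows and `D = diag(c_k ρ_k^r)`. Hence every Hankel matrix has rank at
most `t`, and for size `t` all three factors are invertible: `V` because the `ρ_k` are distinct,
`D` because the `c_k` and `ρ_k` are nonzero.
-/

open Finset

namespace Matrix

variable {K : Type*} [Field K]

def hankel (a : ℤ → K) (r : ℤ) (n : ℕ) : Matrix (Fin n) (Fin n) K :=
  Matrix.of fun i j => a (r + i + j)

section

variable {ι : Type*} [Fintype ι] [DecidableEq ι] {a : ℤ → K} {c ρ : ι → K}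

theorem hankel_eq_transpose_mul_diagonal_mul (hρ : ∀ k, ρ k ≠ 0)
    (ha : ∀ n, a n = ∑ k, c k * ρ k ^ n) (r : ℤ) (n : ℕ) :
    hankel a r n = (rectVandermonde ρ 1 n)ᵀ * diagonal (fun k => c k * ρ k ^ r) *
      rectVandermonde ρ 1 n := by
  ext i j
  rw [mul_apply]
  simp only [hankel, of_apply, ha, mul_diagonal, transpose_apply,
    rectVandermonde_apply, Pi.one_apply, one_pow, mul_one]
  refine sum_congr rfl fun k _ => ?_
  rw [zpow_add₀ (hρ k), zpow_add₀ (hρ k), zpow_natCast, zpow_natCast]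
  ring

theorem rank_hankel_le_card (hρ : ∀ k, ρ k ≠ 0) (ha : ∀ n, a n = ∑ k, c k * ρ k ^ n)
    (r : ℤ) (n : ℕ) : (hankel a r n).rank ≤ Fintype.card ι := by
  rw [hankel_eq_transpose_mul_diagonal_mul hρ ha]
  exact (rank_mul_le_right _ _).trans (rank_le_card_height _)

theorem det_hankel_eq_zero_of_card_lt (hρ : ∀ k, ρ k ≠ 0)
    (ha : ∀ n, a n = ∑ k, c k * ρ k ^ n) (r : ℤ) {n : ℕ} (hn : Fintype.card ι < n) :
    (hankel a r n).det = 0 := by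
  by_contra hdet
  have hrank := rank_hankel_le_card hρ ha r n
  rw [rank_of_det_ne_zero hdet, Fintype.card_fin] at hrank
  omega

end

theorem det_hankel_ne_zero {t : ℕ} {a : ℤ → K} {c ρ : Fin t → K} (hc : ∀ k, c k ≠ 0)
    (hρ : ∀ k, ρ k ≠ 0) (hinj : Function.Injective ρ) (ha : ∀ n, a n = ∑ k, c k * ρ k ^ n)
    (r : ℤ) : (hankel a r t).det ≠ 0 := by
  have hV : (vandermonde ρ).det ≠ 0 := det_vandermonde_ne_zero_iff.mpr hinj
  rw [hankel_eq_transpose_mul_diagonal_mul hρ ha,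
    show rectVandermonde ρ 1 t = vandermonde ρ from (vandermonde_eq_projVandermonde ρ).symm,
    det_mul, det_mul, det_transpose, det_diagonal]
  exact mul_ne_zero (mul_ne_zero hV (prod_ne_zero_iff.mpr fun k _ =>
    mul_ne_zero (hc k) (zpow_ne_zero _ (hρ k)))) hV

end Matrix

/-- For a `t`-sparse polynomial `f = Σ c_j x^{δ_j}` with pairwise distinct term
values `ω^{δ_j}`, every `(m+1)×(m+1)` Hankel matrix of the evaluation sequence
`(f(ω^{r+i}))_i` with `m ≥ t` is singular, the rank of every finite Hankel matrix
is at most `t`, and the `t × t` Hankel matrix has rank exactly `t`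
(so the infinite Hankel matrix has rank exactly `t`). -/
theorem stmt5 (K : Type*) [Field K] (t : ℕ) (δ : Fin t → ℤ) (c : Fin t → K)
    (hc : ∀ j, c j ≠ 0) (ω : K) (hω : ω ≠ 0)
    (hdist : Function.Injective fun j => ω ^ (δ j))
    (a : ℤ → K) (ha : ∀ n : ℤ, a n = ∑ j, c j * (ω ^ (δ j)) ^ n) (r : ℤ) :
    (∀ m : ℕ, t ≤ m →
        (Matrix.of fun i j : Fin (m + 1) => a (r + i + j)).det = 0) ∧
    (∀ m : ℕ, (Matrix.of fun i j : Fin (m + 1) => a (r + i + j)).rank ≤ t) ∧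
    (Matrix.of fun i j : Fin t => a (r + i + j)).rank = t := by
  have hρ : ∀ j, ω ^ δ j ≠ 0 := fun j => zpow_ne_zero _ hω
  refine ⟨fun m hm => ?_, fun m => ?_, ?_⟩
  · exact Matrix.det_hankel_eq_zero_of_card_lt hρ ha r
      ((Fintype.card_fin t).trans_lt (Nat.lt_succ_of_le hm))
  · exact (Fintype.card_fin t).symm ▸ Matrix.rank_hankel_le_card hρ ha r (m + 1)
  · exact (Matrix.rank_of_det_ne_zero (Matrix.det_hankel_ne_zero hc hρ hdist ha r)).trans
      (Fintype.card_fin t)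
end

section
/- Let (a_i)_{i≥1} be a sequence in a field K satisfying a linear recurrence of order at most B whose characteristic polynomial has nonzero constant term (i.e., a_i = f(ω^i) for some B-sparse polynomial with distinct term values). Suppose one entry a_ℓ with B+1 ≤ ℓ ≤ 2B is replaced by a variable α. Then the determinant of the (B+1)×(B+1) Hankel matrix H_{ℓ−B} with entries H[i,j] = a_{ℓ−B+i+j} (0 ≤ i, j ≤ B) is a polynomial in α of degree exactly B+1 with leading term ±α^{B+1}, and the true value f(ω^ℓ) is a root of this determinant polynomial. -/
open Polynomial Finset

set_option maxHeartbeats 1000000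

/-- If the entry `a_ℓ` (`B+1 ≤ ℓ ≤ 2B`) of the evaluation sequence `a_i = f(ω^i)`
of a `B`-sparse polynomial is replaced by a variable `α`, then the determinant of
the `(B+1)×(B+1)` Hankel matrix `H_{ℓ-B}` is a polynomial in `α` of degree exactly
`B+1` with leading term `±α^{B+1}`, and the true value `f(ω^ℓ)` is a root. -/
theorem stmt6 (K : Type*) [Field K] (B t : ℕ) (ht : t ≤ B)
    (δ : Fin t → ℕ) (c : Fin t → K) (hc : ∀ j, c j ≠ 0) (ω : K) (hω : ω ≠ 0)
    (hdist : Function.Injective fun j => ω ^ (δ j))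
    (a : ℕ → K) (ha : ∀ i : ℕ, a i = ∑ j, c j * (ω ^ (δ j)) ^ i)
    (ℓ : ℕ) (hℓ₁ : B + 1 ≤ ℓ) (hℓ₂ : ℓ ≤ 2 * B)
    (M : Matrix (Fin (B + 1)) (Fin (B + 1)) K[X])
    (hM : ∀ i j : Fin (B + 1),
      M i j = if (i : ℕ) + (j : ℕ) = B then X else C (a (ℓ - B + i + j))) :
    M.det.natDegree = B + 1 ∧
    (M.det.leadingCoeff = 1 ∨ M.det.leadingCoeff = -1) ∧
    M.det.eval (a ℓ) = 0 := by
  classical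
  -- the antidiagonal permutation
  set rev : Equiv.Perm (Fin (B + 1)) := Fin.revPerm with hrevdef
  have hrevval : ∀ i : Fin (B + 1), ((rev i : Fin (B + 1)) : ℕ) + (i : ℕ) = B := by
    intro i
    have := i.is_le
    simp [hrevdef, Fin.val_rev]
    omega
  -- product along the antidiagonal permutation
  have hprod_rev : (∏ i, M (rev i) i) = X ^ (B + 1) := by
    have h : ∀ i : Fin (B + 1), M (rev i) i = X := by
      intro i
      rw [hM, if_pos (hrevval i)]
    calc (∏ i, M (rev i) i) = ∏ _i : Fin (B + 1), (X : K[X]) :=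
          Finset.prod_congr rfl fun i _ => h i
      _ = X ^ (B + 1) := by simp
  -- every other permutation contributes degree ≤ B
  have hdeg_other : ∀ σ : Equiv.Perm (Fin (B + 1)), σ ≠ rev →
      (∏ i, M (σ i) i).natDegree ≤ B := by
    intro σ hσ
    obtain ⟨i₀, hi₀⟩ : ∃ i, σ i ≠ rev i := by
      by_contra h
      push_neg at h
      exact hσ (Equiv.ext h)
    have hnot : ¬ ((σ i₀ : ℕ) + (i₀ : ℕ) = B) := by
      intro h
      apply hi₀
      apply Fin.ext
      have := hrevval i₀
      omega
    have hdi : ∀ i : Fin (B + 1), (M (σ i) i).natDegree ≤ 1 := by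
      intro i
      rw [hM]
      split
      · simp
      · simp
    have hdi₀ : (M (σ i₀) i₀).natDegree = 0 := by
      rw [hM, if_neg hnot]
      simp
    calc (∏ i, M (σ i) i).natDegree ≤ ∑ i, (M (σ i) i).natDegree :=
          Polynomial.natDegree_prod_le _ _
      _ = (M (σ i₀) i₀).natDegree + ∑ i ∈ Finset.univ.erase i₀, (M (σ i) i).natDegree :=
          (Finset.add_sum_erase _ (fun i => (M (σ i) i).natDegree) (Finset.mem_univ i₀)).symm
      _ ≤ 0 + (Finset.univ.erase i₀).card * 1 := by
          gcongr
          · exact hdi₀.le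
          · exact Finset.sum_le_card_nsmul _ _ 1 fun i _ => hdi i
      _ ≤ B := by
          simp [Finset.card_erase_of_mem]
  -- decompose the determinant
  have hdet : M.det = Equiv.Perm.sign rev • X ^ (B + 1) +
      ∑ σ ∈ Finset.univ.erase rev, Equiv.Perm.sign σ • ∏ i, M (σ i) i := by
    rw [Matrix.det_apply, ← Finset.add_sum_erase _ _ (Finset.mem_univ rev), hprod_rev]
  set Q : K[X] := ∑ σ ∈ Finset.univ.erase rev, Equiv.Perm.sign σ • ∏ i, M (σ i) i with hQ
  have hQdeg : Q.degree < (B + 1 : ℕ) := by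
    have h1 : Q.natDegree ≤ B := by
      apply Polynomial.natDegree_sum_le_of_forall_le
      intro σ hσ
      rcases Int.units_eq_one_or (Equiv.Perm.sign σ) with h | h <;> rw [h]
      · rw [one_smul]
        exact hdeg_other σ (Finset.ne_of_mem_erase hσ)
      · rw [show ((-1 : ℤˣ)) = -(1 : ℤˣ) from rfl, Units.neg_smul, one_smul,
          Polynomial.natDegree_neg]
        exact hdeg_other σ (Finset.ne_of_mem_erase hσ)
    calc Q.degree ≤ (Q.natDegree : WithBot ℕ) := Polynomial.degree_le_natDegree
      _ ≤ (B : WithBot ℕ) := by exact_mod_cast h1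
      _ < ((B + 1 : ℕ) : WithBot ℕ) := by exact_mod_cast Nat.lt_succ_self B
  -- the leading term
  set T : K[X] := Equiv.Perm.sign rev • X ^ (B + 1) with hT
  have hTcases : T = X ^ (B + 1) ∨ T = -(X ^ (B + 1)) := by
    rcases Int.units_eq_one_or (Equiv.Perm.sign rev) with h | h
    · left; rw [hT, h, one_smul]
    · right; rw [hT, h]
      rw [show ((-1 : ℤˣ)) = -(1 : ℤˣ) from rfl, Units.neg_smul, one_smul]
  have hTdeg : T.degree = (B + 1 : ℕ) := by
    rcases hTcases with h | h <;> rw [h] <;>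
      simp [Polynomial.degree_X_pow]
  have hTlead : T.leadingCoeff = 1 ∨ T.leadingCoeff = -1 := by
    rcases hTcases with h | h
    · left; rw [h, Polynomial.leadingCoeff_X_pow]
    · right; rw [h, Polynomial.leadingCoeff_neg, Polynomial.leadingCoeff_X_pow]
  have hQT : Q.degree < T.degree := by rw [hTdeg]; exact hQdeg
  have hdeg : M.det.natDegree = B + 1 := by
    rw [hdet, Polynomial.natDegree_add_eq_left_of_degree_lt hQT]
    exact Polynomial.natDegree_eq_of_degree_eq_some hTdeg
  have hlead : M.det.leadingCoeff = 1 ∨ M.det.leadingCoeff = -1 := by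
    rw [hdet, Polynomial.leadingCoeff_add_of_degree_lt' hQT]
    exact hTlead
  refine ⟨hdeg, hlead, ?_⟩
  -- evaluation at the true value gives the unmodified Hankel matrix, which is singular
  have heval : M.det.eval (a ℓ) = (M.map (Polynomial.eval (a ℓ))).det := by
    have := RingHom.map_det (Polynomial.evalRingHom (a ℓ)) M
    simpa using this
  rw [heval]
  set w : Fin t → K := fun k => ω ^ δ k with hw
  set V : Matrix (Fin (B + 1)) (Fin t) K := fun i k => c k * w k ^ (ℓ - B + (i : ℕ)) with hV
  set W : Matrix (Fin t) (Fin (B + 1)) K := fun k j => w k ^ (j : ℕ) with hW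
  have hfac : M.map (Polynomial.eval (a ℓ)) = V * W := by
    ext i j
    have hentry : (M.map (Polynomial.eval (a ℓ))) i j = a (ℓ - B + (i : ℕ) + (j : ℕ)) := by
      simp only [Matrix.map_apply, hM]
      split
      · rename_i h
        have : ℓ - B + (i : ℕ) + (j : ℕ) = ℓ := by omega
        rw [this]
        simp
      · simp
    rw [hentry, ha]
    simp only [Matrix.mul_apply, hV, hW]
    apply Finset.sum_congr rfl
    intro k _
    simp only [hw]
    ring
  rw [hfac]
  by_contra hne
  have hunit : IsUnit (V * W) := by
    rw [Matrix.isUnit_iff_isUnit_det]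
    exact isUnit_iff_ne_zero.mpr hne
  have hrank : (V * W).rank = B + 1 := by
    rw [Matrix.rank_of_isUnit _ hunit, Fintype.card_fin]
  have hle : (V * W).rank ≤ t := by
    calc (V * W).rank ≤ W.rank := Matrix.rank_mul_le_right V W
      _ ≤ Fintype.card (Fin t) := Matrix.rank_le_card_height W
      _ = t := Fintype.card_fin t
  omega
end

section
/- Let B ≥ 1, let r be an odd integer with 1 ≤ r ≤ 2B−1, and let G_r be the (B+1)×(B+1) matrix with entries G_r[i,j] = a_{|r+2(i+j)|} + a_{|r+2(i−j)|} for 0 ≤ i, j ≤ B, where (a_m) is a family of field elements indexed by odd positive integers. If the entry a_{r+2B} is replaced by a variable α, then α occurs (added to a constant) exactly on the antidiagonal i + j = B of G_r, and det(G_r) is a univariate polynomial of degree B+1 in α. -/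
/-!
Every entry of `G_r` has degree at most one in `α`, so the coefficient of `α ^ (B + 1)` in
`det G_r` is the determinant of the matrix of `α`-coefficients. That matrix is supported on the
antidiagonal, with entries `1` there except for the corner `(B, 0)`, where both subscripts
`|r + 2(i ± j)|` equal `r + 2B` and the entry is `2`; its determinant is `± 2 ≠ 0`.
-/

open Polynomial

namespace Matrix

variable {n R : Type*} [Fintype n] [DecidableEq n] [CommRing R]

theorem natDegree_det_eq_card_of_natDegree_le_one (M : Matrix n n R[X])
    (hM : ∀ i j, (M i j).natDegree ≤ 1) (hlead : (M.map (coeff · 1)).det ≠ 0) :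
    M.det.natDegree = Fintype.card n := by
  have hlin : M = (X : R[X]) • (M.map (coeff · 1)).map C + (M.map (coeff · 0)).map C := by
    refine Matrix.ext fun i j => ?_
    simpa [mul_comm X] using eq_X_add_C_of_natDegree_le_one (hM i j)
  rw [hlin]
  exact natDegree_eq_of_le_of_coeff_ne_zero (natDegree_det_X_add_C_le _ _)
    (by rwa [coeff_det_X_add_C_card])

theorem sign_mul_det_eq_prod_of_apply_eq_zero (A : Matrix n n R) (σ : Equiv.Perm n)
    (hA : ∀ i j, σ j ≠ i → A i j = 0) :
    Equiv.Perm.sign σ * A.det = ∏ j, A (σ j) j := by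
  have hdiag : A.submatrix σ id = diagonal fun j => A (σ j) j := by
    ext i j
    by_cases hij : i = j
    · simp [hij]
    · simp [diagonal_apply_ne _ hij, hA (σ i) j (σ.injective.ne (Ne.symm hij))]
  rw [← det_permute, hdiag, det_diagonal]

end Matrix

theorem natDegree_le_one_and_coeff_one_ne_zero {K : Type*} [Field K] (h2 : (2 : K) ≠ 0)
    {p : K[X]} (hp : ∃ c : K, p = X + C c ∨ p = 2 * X) : p.natDegree ≤ 1 ∧ p.coeff 1 ≠ 0 := by
  obtain ⟨c, rfl | rfl⟩ := hp
  · exact ⟨(natDegree_X_add_C c).le, by simp⟩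
  · exact ⟨natDegree_mul_le.trans (by simp), by simpa using h2⟩

namespace HankelToeplitz

theorem natAbs_add_eq_iff {r B i j : ℕ} :
    ((r : ℤ) + 2 * ((i : ℤ) + j)).natAbs = r + 2 * B ↔ i + j = B := by
  omega

theorem natAbs_sub_eq_iff {r B i j : ℕ} (hr : 1 ≤ r) (hi : i ≤ B) (hj : j ≤ B) :
    ((r : ℤ) + 2 * ((i : ℤ) - j)).natAbs = r + 2 * B ↔ i = B ∧ j = 0 := by
  omega

variable {K : Type*} [Field K] {B r : ℕ} {a : ℕ → K} {e : ℕ → K[X]}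

noncomputable def entry (e : ℕ → K[X]) (r i j : ℕ) : K[X] :=
  e ((r : ℤ) + 2 * ((i : ℤ) + j)).natAbs + e ((r : ℤ) + 2 * ((i : ℤ) - j)).natAbs

theorem entry_of_add_eq (he : ∀ m, e m = if m = r + 2 * B then X else C (a m))
    (hr : 1 ≤ r) {i j : ℕ} (hi : i ≤ B) (hj : j ≤ B) (hij : i + j = B) :
    ∃ c : K, entry e r i j = X + C c ∨ entry e r i j = 2 * X := by
  rw [entry, he, he, if_pos (natAbs_add_eq_iff.2 hij)]
  by_cases hiB : i = B
  · rw [if_pos ((natAbs_sub_eq_iff hr hi hj).2 ⟨hiB, by omega⟩)]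
    exact ⟨0, Or.inr (two_mul X).symm⟩
  · rw [if_neg fun h => hiB ((natAbs_sub_eq_iff hr hi hj).1 h).1]
    exact ⟨_, Or.inl rfl⟩

theorem entry_of_add_ne (he : ∀ m, e m = if m = r + 2 * B then X else C (a m))
    (hr : 1 ≤ r) {i j : ℕ} (hi : i ≤ B) (hj : j ≤ B) (hij : i + j ≠ B) :
    ∃ c : K, entry e r i j = C c := by
  rw [entry, he, he, if_neg (mt natAbs_add_eq_iff.1 hij),
    if_neg fun h => hij (by have := (natAbs_sub_eq_iff hr hi hj).1 h; omega), ← C_add]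
  exact ⟨_, rfl⟩

end HankelToeplitz

theorem stmt7_general (K : Type*) [Field K] (h2 : (2 : K) ≠ 0) (B : ℕ)
    (r : ℕ) (hr1 : 1 ≤ r)
    (a : ℕ → K)
    (e : ℕ → K[X]) (he : ∀ m, e m = if m = r + 2 * B then X else C (a m))
    (G : Matrix (Fin (B + 1)) (Fin (B + 1)) K[X])
    (hG : ∀ i j : Fin (B + 1),
      G i j = e ((r + 2 * ((i : ℤ) + (j : ℤ))).natAbs)
            + e ((r + 2 * ((i : ℤ) - (j : ℤ))).natAbs)) :
    (∀ i j : Fin (B + 1),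
        (((i : ℕ) + (j : ℕ) = B) → ∃ cst : K, G i j = X + C cst ∨ G i j = 2 * X) ∧
        (((i : ℕ) + (j : ℕ) ≠ B) → ∃ cst : K, G i j = C cst)) ∧
    G.det.natDegree = B + 1 := by
  have hshape : ∀ i j : Fin (B + 1),
      ((i : ℕ) + j = B → ∃ c : K, G i j = X + C c ∨ G i j = 2 * X) ∧
      ((i : ℕ) + j ≠ B → ∃ c : K, G i j = C c) := fun i j => by
    rw [hG]
    exact ⟨HankelToeplitz.entry_of_add_eq he hr1 (Nat.le_of_lt_succ i.2) (Nat.le_of_lt_succ j.2),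
      HankelToeplitz.entry_of_add_ne he hr1 (Nat.le_of_lt_succ i.2) (Nat.le_of_lt_succ j.2)⟩
  refine ⟨hshape, ?_⟩
  have hrev : ∀ i j : Fin (B + 1), Fin.revPerm j = i ↔ (i : ℕ) + j = B := by
    intro i j
    simp only [Fin.revPerm_apply, Fin.ext_iff, Fin.val_rev]
    omega
  have hoff : ∀ i j, Fin.revPerm j ≠ i → (G i j).coeff 1 = 0 ∧ (G i j).natDegree = 0 := by
    intro i j h
    obtain ⟨c, hc⟩ := (hshape i j).2 (mt (hrev i j).2 h)
    simp [hc]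
  have hon : ∀ j, (G (Fin.revPerm j) j).natDegree ≤ 1 ∧ (G (Fin.revPerm j) j).coeff 1 ≠ 0 :=
    fun j => natDegree_le_one_and_coeff_one_ne_zero h2 ((hshape _ j).1 ((hrev _ j).1 rfl))
  have hlin : ∀ i j, (G i j).natDegree ≤ 1 := by
    intro i j
    by_cases h : Fin.revPerm j = i
    · exact h ▸ (hon j).1
    · exact (hoff i j h).2.le.trans zero_le_one
  rw [Matrix.natDegree_det_eq_card_of_natDegree_le_one G hlin, Fintype.card_fin]
  intro hdet
  have hsign := Matrix.sign_mul_det_eq_prod_of_apply_eq_zero (G.map (coeff · 1)) Fin.revPerm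
    fun i j h => (hoff i j h).1
  rw [hdet, mul_zero] at hsign
  exact Finset.prod_ne_zero_iff.2 (fun j _ => (hon j).2) hsign.symm

/-- In the Hankel+Toeplitz matrix `G_r = [a_{|r+2(i+j)|} + a_{|r+2(i-j)|}]`, if the
value `a_{r+2B}` is replaced by a variable `α`, then `α` occurs (added to a
constant) exactly on the antidiagonal `i + j = B`, and `det G_r` is a univariate
polynomial of degree `B + 1` in `α`. -/
theorem stmt7 (K : Type*) [Field K] (h2 : (2 : K) ≠ 0) (B : ℕ) (hB : 1 ≤ B)
    (r : ℕ) (hodd : Odd r) (hr1 : 1 ≤ r) (hr2 : r ≤ 2 * B - 1)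
    (a : ℕ → K)
    (e : ℕ → K[X]) (he : ∀ m, e m = if m = r + 2 * B then X else C (a m))
    (G : Matrix (Fin (B + 1)) (Fin (B + 1)) K[X])
    (hG : ∀ i j : Fin (B + 1),
      G i j = e ((r + 2 * ((i : ℤ) + (j : ℤ))).natAbs)
            + e ((r + 2 * ((i : ℤ) - (j : ℤ))).natAbs)) :
    (∀ i j : Fin (B + 1),
        (((i : ℕ) + (j : ℕ) = B) → ∃ cst : K, G i j = X + C cst ∨ G i j = 2 * X) ∧
        (((i : ℕ) + (j : ℕ) ≠ B) → ∃ cst : K, G i j = C cst)) ∧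
    G.det.natDegree = B + 1 :=
  stmt7_general K h2 B r hr1 a e he G hG
end

section
/- Let B ≥ 1, let r be an odd integer with 1 ≤ r ≤ 2B−1, and let G_r be the (B+1)×(B+1) matrix with entries G_r[i,j] = a_{|r+2(i+j)|} + a_{|r+2(i−j)|} for 0 ≤ i, j ≤ B. If the entry a_r is replaced by a variable α, then det(G_r) is a univariate polynomial of degree B+1 in α. -/
open Polynomial Matrix

/-!
Every entry of `G_r` has degree at most one in `α`, so `det G_r` has degree at most `B + 1`,
and its coefficient of `α ^ (B + 1)` is the determinant of the matrix of `α`-coefficients.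
That matrix is upper triangular: `α` sits at `(i, j)` only when `i = j = 0` (Hankel part) or
`j = i` or `j = i + r` (Toeplitz part). Its diagonal entries are `2` at `(0, 0)` and `1`
elsewhere, so in characteristic `≠ 2` its determinant is nonzero.
-/

namespace Polynomial

variable {n R : Type*} [CommRing R]

theorem eq_X_smul_map_C_add_map_C_of_natDegree_le_one (G : Matrix n n R[X])
    (hG : ∀ i j, (G i j).natDegree ≤ 1) :
    G = (X : R[X]) • (G.map (coeff · 1)).map C + (G.map (coeff · 0)).map C := by
  ext1 i j
  simpa [mul_comm X] using eq_X_add_C_of_natDegree_le_one (hG i j)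

variable [Fintype n] [DecidableEq n]

theorem natDegree_det_X_add_C_of_det_ne_zero (A B : Matrix n n R) (hA : A.det ≠ 0) :
    (det ((X : R[X]) • A.map C + B.map C)).natDegree = Fintype.card n :=
  (natDegree_det_X_add_C_le A B).antisymm
    (le_natDegree_of_ne_zero (by rwa [coeff_det_X_add_C_card]))

theorem natDegree_det_of_natDegree_le_one (G : Matrix n n R[X])
    (hG : ∀ i j, (G i j).natDegree ≤ 1) (hA : (G.map (coeff · 1)).det ≠ 0) :
    G.det.natDegree = Fintype.card n := by
  rw [eq_X_smul_map_C_add_map_C_of_natDegree_le_one G hG,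
    natDegree_det_X_add_C_of_det_ne_zero _ _ hA]

end Polynomial

theorem Int.natAbs_add_two_mul_add_eq_iff (r i j : ℕ) :
    ((r : ℤ) + 2 * ((i : ℤ) + j)).natAbs = r ↔ i = 0 ∧ j = 0 := by
  omega

theorem Int.natAbs_add_two_mul_sub_eq_iff (r i j : ℕ) :
    ((r : ℤ) + 2 * ((i : ℤ) - j)).natAbs = r ↔ j = i ∨ j = i + r := by
  omega

/-- The coefficient of `α` in `G_r`. -/
def hankelToeplitzCoeffMatrix (K : Type*) [Semiring K] (B r : ℕ) :
    Matrix (Fin (B + 1)) (Fin (B + 1)) K :=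
  Matrix.of fun i j =>
    (if (i : ℕ) = 0 ∧ (j : ℕ) = 0 then 1 else 0) + if (j : ℕ) = i ∨ (j : ℕ) = i + r then 1 else 0

theorem hankelToeplitzCoeffMatrix_isUpperTriangular (K : Type*) [Semiring K] (B r : ℕ) :
    (hankelToeplitzCoeffMatrix K B r).IsUpperTriangular := by
  intro i j (hji : (j : ℕ) < i)
  rw [hankelToeplitzCoeffMatrix, of_apply, if_neg (by omega), if_neg (by omega), add_zero]

theorem det_hankelToeplitzCoeffMatrix_ne_zero {K : Type*} [CommRing K] [IsDomain K] (h2 : (2 : K) ≠ 0)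
    (B r : ℕ) : (hankelToeplitzCoeffMatrix K B r).det ≠ 0 := by
  rw [det_of_isUpperTriangular (hankelToeplitzCoeffMatrix_isUpperTriangular K B r),
    Finset.prod_ne_zero_iff]
  intro i _
  simp only [hankelToeplitzCoeffMatrix, of_apply, true_or, if_true]
  split_ifs
  · rwa [one_add_one_eq_two]
  · simp

theorem stmt8_general (K : Type*) [Field K] (h2 : (2 : K) ≠ 0) (B : ℕ)
    (r : ℕ)
    (a : ℕ → K)
    (e : ℕ → K[X]) (he : ∀ m, e m = if m = r then X else C (a m))
    (G : Matrix (Fin (B + 1)) (Fin (B + 1)) K[X])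
    (hG : ∀ i j : Fin (B + 1),
      G i j = e ((r + 2 * ((i : ℤ) + (j : ℤ))).natAbs)
            + e ((r + 2 * ((i : ℤ) - (j : ℤ))).natAbs)) :
    G.det.natDegree = B + 1 := by
  have he_deg (m : ℕ) : (e m).natDegree ≤ 1 := by
    rw [he]; split_ifs <;> simp
  have he_coeff (m : ℕ) : (e m).coeff 1 = if m = r then 1 else 0 := by
    rw [he]; split_ifs <;> simp
  have hG_deg (i j) : (G i j).natDegree ≤ 1 := by
    rw [hG]; exact (natDegree_add_le _ _).trans (max_le (he_deg _) (he_deg _))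
  have hG_coeff : G.map (coeff · 1) = hankelToeplitzCoeffMatrix K B r := by
    ext i j
    simp only [map_apply, hankelToeplitzCoeffMatrix, of_apply, hG, coeff_add, he_coeff,
      Int.natAbs_add_two_mul_add_eq_iff, Int.natAbs_add_two_mul_sub_eq_iff]
  rw [natDegree_det_of_natDegree_le_one G hG_deg
    (hG_coeff ▸ det_hankelToeplitzCoeffMatrix_ne_zero h2 B r), Fintype.card_fin]

/-- In the Hankel+Toeplitz matrix `G_r = [a_{|r+2(i+j)|} + a_{|r+2(i-j)|}]`, if the
value `a_r` is replaced by a variable `α`, then `det G_r` is a univariate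
polynomial of degree `B + 1` in `α`. -/
theorem stmt8 (K : Type*) [Field K] (h2 : (2 : K) ≠ 0) (B : ℕ) (hB : 1 ≤ B)
    (r : ℕ) (hodd : Odd r) (hr1 : 1 ≤ r) (hr2 : r ≤ 2 * B - 1)
    (a : ℕ → K)
    (e : ℕ → K[X]) (he : ∀ m, e m = if m = r then X else C (a m))
    (G : Matrix (Fin (B + 1)) (Fin (B + 1)) K[X])
    (hG : ∀ i j : Fin (B + 1),
      G i j = e ((r + 2 * ((i : ℤ) + (j : ℤ))).natAbs)
            + e ((r + 2 * ((i : ℤ) - (j : ℤ))).natAbs)) :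
    G.det.natDegree = B + 1 :=
  stmt8_general K h2 B r a e he G hG
end

section
/- Let B, E ≥ 1, ω > 0 a positive real with ω ≠ 1, and let f ∈ ℝ[x] have at most B terms. Suppose N ≥ 2B + 2E and values â_1, …, â_N ∈ ℝ satisfy â_i = f(ω^i) for all but at most E indices i. If g ∈ ℝ[x] also has at most B terms and â_i = g(ω^i) for all but at most E indices i, then g = f. -/
open Polynomial Finset

/-- The derivative loses at least one term when the constant coefficient is nonzero. -/
lemma deriv_support_card_lt {q : ℝ[X]} (h0 : q.coeff 0 ≠ 0) :
    (derivative q).support.card + 1 ≤ q.support.card := by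
  have hsub : (derivative q).support ⊆ (q.support.erase 0).image (· - 1) := by
    intro n hn
    rw [Polynomial.mem_support_iff, Polynomial.coeff_derivative] at hn
    have : q.coeff (n + 1) ≠ 0 := fun h => hn (by simp [h])
    refine Finset.mem_image.2 ⟨n + 1, ?_, by simp⟩
    exact Finset.mem_erase.2 ⟨by omega, Polynomial.mem_support_iff.2 this⟩
  calc (derivative q).support.card + 1
      ≤ ((q.support.erase 0).image (· - 1)).card + 1 :=
        Nat.add_le_add_right (Finset.card_le_card hsub) 1
    _ ≤ (q.support.erase 0).card + 1 := Nat.add_le_add_right Finset.card_image_le 1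
    _ = q.support.card := by
        rw [Finset.card_erase_of_mem (Polynomial.mem_support_iff.2 h0)]
        have : 0 < q.support.card :=
          Finset.card_pos.2 ⟨0, Polynomial.mem_support_iff.2 h0⟩
        omega

/-- A real polynomial with at most `n` terms vanishing at `n` distinct positive points is zero. -/
lemma sparse_eq_zero : ∀ n : ℕ, ∀ (p : ℝ[X]) (S : Finset ℝ), S.card = n →
    p.support.card ≤ n → (∀ x ∈ S, 0 < x) → (∀ x ∈ S, p.eval x = 0) → p = 0 := by
  intro n
  induction n using Nat.strong_induction_on with
  | _ n IH =>
    intro p S hcard hsupp hpos hroot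
    by_contra hp
    -- n ≥ 1
    have hn1 : 1 ≤ n := by
      rcases Nat.eq_zero_or_pos n with h | h
      · exact absurd (Polynomial.support_eq_empty.1 (Finset.card_eq_zero.1 (by omega))) hp
      · exact h
    -- factor out the trailing power of X
    set m := p.natTrailingDegree with hm
    have hdvd : X ^ m ∣ p := by
      rw [Polynomial.X_pow_dvd_iff]
      intro d hd
      exact Polynomial.coeff_eq_zero_of_lt_natTrailingDegree hd
    obtain ⟨q, hq⟩ := hdvd
    have hq0 : q.coeff 0 ≠ 0 := by
      have : p.coeff m = q.coeff 0 := by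
        rw [hq]
        simpa using Polynomial.coeff_X_pow_mul q m 0
      rw [← this]
      exact Polynomial.trailingCoeff_nonzero_iff_nonzero.2 hp
    -- support of q is at most that of p
    have hsq : q.support.card ≤ p.support.card := by
      have himg : q.support.image (· + m) ⊆ p.support := by
        intro a ha
        obtain ⟨d, hd, rfl⟩ := Finset.mem_image.1 ha
        rw [Polynomial.mem_support_iff] at hd ⊢
        rw [hq, Polynomial.coeff_X_pow_mul]
        exact hd
      have : (q.support.image (· + m)).card = q.support.card :=
        Finset.card_image_of_injective _ (add_left_injective m)
      rw [← this]
      exact Finset.card_le_card himg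
    -- q vanishes on S
    have hqroot : ∀ x ∈ S, q.eval x = 0 := by
      intro x hx
      have hx0 : (0:ℝ) < x := hpos x hx
      have := hroot x hx
      rw [hq, Polynomial.eval_mul, Polynomial.eval_pow, Polynomial.eval_X] at this
      have hxm : x ^ m ≠ 0 := pow_ne_zero _ (ne_of_gt hx0)
      exact (mul_eq_zero.1 this).resolve_left hxm
    -- S is nonempty; take the maximum
    have hSne : S.Nonempty := Finset.card_pos.1 (by omega)
    set M := S.max' hSne with hM
    set T := S.erase M with hT
    have hTcard : T.card = n - 1 := by rw [hT, Finset.card_erase_of_mem (S.max'_mem hSne), hcard]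
    -- the "next" element of S after x, for x ∈ T
    have hnext : ∀ x ∈ T, ∃ y, y ∈ S ∧ x < y ∧ ∀ z ∈ S, x < z → y ≤ z := by
      intro x hx
      have hxS : x ∈ S := Finset.mem_of_mem_erase hx
      have hxM : x < M := lt_of_le_of_ne (S.le_max' x hxS) (Finset.ne_of_mem_erase hx)
      have hne : (S.filter (x < ·)).Nonempty := ⟨M, Finset.mem_filter.2 ⟨S.max'_mem hSne, hxM⟩⟩
      refine ⟨(S.filter (x < ·)).min' hne, ?_, ?_, ?_⟩
      · exact Finset.mem_of_mem_filter _ ((S.filter (x < ·)).min'_mem hne)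
      · exact (Finset.mem_filter.1 ((S.filter (x < ·)).min'_mem hne)).2
      · intro z hz hxz
        exact Finset.min'_le _ z (Finset.mem_filter.2 ⟨hz, hxz⟩)
    -- Rolle: a root of q' strictly between x and next x
    have key : ∀ x : ℝ, ∃ c : ℝ, x ∈ T →
        x < c ∧ (∀ z ∈ S, x < z → c < z) ∧ (derivative q).eval c = 0 := by
      intro x
      by_cases hx : x ∈ T
      · obtain ⟨y, hyS, hxy, hymin⟩ := hnext x hx
        have hxS : x ∈ S := Finset.mem_of_mem_erase hx
        have hcont : ContinuousOn (fun t => q.eval t) (Set.Icc x y) :=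
          (Polynomial.continuous q).continuousOn
        have heq : q.eval x = q.eval y := by rw [hqroot x hxS, hqroot y hyS]
        obtain ⟨c, hc, hc0⟩ := exists_deriv_eq_zero hxy hcont heq
        refine ⟨c, fun _ => ⟨hc.1, fun z hz hxz => lt_of_lt_of_le hc.2 (hymin z hz hxz), ?_⟩⟩
        rw [← Polynomial.deriv]
        exact hc0
      · exact ⟨0, fun h => absurd h hx⟩
    choose y hy using key
    set S' := T.image y with hS'
    have hinjT : Set.InjOn y T := by
      intro x1 h1 x2 h2 hxy
      by_contra hne
      rcases lt_or_gt_of_ne hne with hlt | hlt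
      · have := (hy x1 h1).2.1 x2 (Finset.mem_of_mem_erase h2) hlt
        have := (hy x2 h2).1
        linarith [hxy ▸ this]
      · have := (hy x2 h2).2.1 x1 (Finset.mem_of_mem_erase h1) hlt
        have := (hy x1 h1).1
        linarith [hxy ▸ this]
    have hS'card : S'.card = n - 1 := by
      rw [hS', Finset.card_image_of_injOn hinjT, hTcard]
    have hq'supp : (derivative q).support.card ≤ n - 1 := by
      have h1 := deriv_support_card_lt hq0
      have h2 : p.support.card = (p.support).card := rfl
      omega
    have hq'pos : ∀ c ∈ S', 0 < c := by
      intro c hc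
      obtain ⟨x, hx, rfl⟩ := Finset.mem_image.1 hc
      exact lt_trans (hpos x (Finset.mem_of_mem_erase hx)) (hy x hx).1
    have hq'root : ∀ c ∈ S', (derivative q).eval c = 0 := by
      intro c hc
      obtain ⟨x, hx, rfl⟩ := Finset.mem_image.1 hc
      exact (hy x hx).2.2
    have hder : derivative q = 0 :=
      IH (n - 1) (by omega) (derivative q) S' hS'card hq'supp hq'pos hq'root
    -- q is a nonzero constant, contradicting that it has a positive root
    have hqC : q = C (q.coeff 0) := Polynomial.eq_C_of_natDegree_eq_zero
      (Polynomial.natDegree_eq_zero_of_derivative_eq_zero hder)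
    obtain ⟨x0, hx0⟩ := hSne
    have := hqroot x0 hx0
    rw [hqC, Polynomial.eval_C] at this
    exact hq0 this

/-- Powers of a positive real `ω ≠ 1` are injective. -/
lemma pow_inj_of_ne_one {ω : ℝ} (hω : 0 < ω) (hω1 : ω ≠ 1) :
    Function.Injective (fun n : ℕ => ω ^ n) := by
  rcases lt_or_gt_of_ne hω1 with h | h
  · have : StrictAnti (fun n : ℕ => ω ^ n) :=
      strictAnti_nat_of_succ_lt fun n => by
        calc ω ^ (n + 1) = ω ^ n * ω := pow_succ ω n
          _ < ω ^ n * 1 := by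
              have := pow_pos hω n
              nlinarith
          _ = ω ^ n := mul_one _
    exact this.injective
  · have : StrictMono (fun n : ℕ => ω ^ n) :=
      strictMono_nat_of_lt_succ fun n => by
        calc ω ^ n = ω ^ n * 1 := (mul_one _).symm
          _ < ω ^ n * ω := by
              have := pow_pos hω n
              nlinarith
          _ = ω ^ (n + 1) := (pow_succ ω n).symm
    exact this.injective

/-- Uniqueness of `B`-sparse real interpolation with at most `E` errors from
`N ≥ 2B + 2E` evaluations at the distinct positive points `ω^1, …, ω^N`. -/
theorem stmt12 (B E N : ℕ) (hB : 1 ≤ B) (hE : 1 ≤ E) (hN : 2 * B + 2 * E ≤ N)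
    (ω : ℝ) (hω : 0 < ω) (hω1 : ω ≠ 1)
    (f g : ℝ[X]) (hf : f.support.card ≤ B) (hg : g.support.card ≤ B)
    (ahat : Fin N → ℝ)
    (herrf : (univ.filter fun i : Fin N => ahat i ≠ f.eval (ω ^ ((i : ℕ) + 1))).card ≤ E)
    (herrg : (univ.filter fun i : Fin N => ahat i ≠ g.eval (ω ^ ((i : ℕ) + 1))).card ≤ E) :
    g = f := by
  set Bad := (univ.filter fun i : Fin N => ahat i ≠ f.eval (ω ^ ((i : ℕ) + 1))) ∪
    (univ.filter fun i : Fin N => ahat i ≠ g.eval (ω ^ ((i : ℕ) + 1))) with hBad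
  have hBadcard : Bad.card ≤ 2 * E := by
    calc Bad.card ≤ _ + _ := Finset.card_union_le _ _
      _ ≤ 2 * E := by omega
  set Good := (univ : Finset (Fin N)) \ Bad with hGood
  have hGoodcard : 2 * B ≤ Good.card := by
    have h2 : (univ : Finset (Fin N)).card = N := Finset.card_fin N
    have h3 : Good.card = N - Bad.card := by
      rw [hGood, Finset.card_sdiff_of_subset (Finset.subset_univ Bad), h2]
    omega
  have hGoodeq : ∀ i ∈ Good, f.eval (ω ^ ((i : ℕ) + 1)) = g.eval (ω ^ ((i : ℕ) + 1)) := by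
    intro i hi
    rw [hGood, Finset.mem_sdiff, hBad, Finset.mem_union, not_or] at hi
    obtain ⟨-, h1, h2⟩ := hi
    rw [Finset.mem_filter, not_and, not_not] at h1 h2
    rw [← h1 (Finset.mem_univ i), ← h2 (Finset.mem_univ i)]
  set p := g - f with hp
  set S := Good.image (fun i : Fin N => ω ^ ((i : ℕ) + 1)) with hS
  have hinj : Set.InjOn (fun i : Fin N => ω ^ ((i : ℕ) + 1)) Good := by
    intro i _ j _ hij
    have := pow_inj_of_ne_one hω hω1 hij
    exact Fin.ext (by omega)
  have hScard : S.card = Good.card := Finset.card_image_of_injOn hinj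
  have hpsupp : p.support.card ≤ S.card := by
    have : p.support ⊆ g.support ∪ f.support := by
      rw [hp, sub_eq_add_neg]
      simpa [Polynomial.support_neg] using Polynomial.support_add (p := g) (q := -f)
    have h1 : p.support.card ≤ g.support.card + f.support.card :=
      le_trans (Finset.card_le_card this) (Finset.card_union_le _ _)
    omega
  have hppos : ∀ x ∈ S, 0 < x := by
    intro x hx
    obtain ⟨i, _, rfl⟩ := Finset.mem_image.1 hx
    exact pow_pos hω _
  have hproot : ∀ x ∈ S, p.eval x = 0 := by
    intro x hx
    obtain ⟨i, hi, rfl⟩ := Finset.mem_image.1 hx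
    rw [hp, Polynomial.eval_sub, hGoodeq i hi, sub_self]
  have := sparse_eq_zero S.card p S rfl hpsupp hppos hproot
  have : g - f = 0 := this
  exact sub_eq_zero.1 this
end

section
/- Let B ≥ 1 and ω > 0, ω ≠ 1. Define h(x) = Π_{i=0}^{2B−2}(x − ω^i), let f¹ be the sum of the odd-degree terms of h and f² the negative of the sum of the even-degree terms of h. Then h = f¹ − f², both f¹ and f² have at most B nonzero terms, and f¹(ω^i) = f²(ω^i) for i = 0, 1, …, 2B − 2. -/
open Polynomial Finset

/- `h` vanishes at the `2B - 1` points `ω ^ i` by construction, so the two parts of `h = f₁ - f₂`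
agree there; as `deg h = 2B - 1`, each part only involves the `B` exponents of its parity below
`2B`. -/

theorem Polynomial.eq_sub_of_coeff_eq_odd_even {R : Type*} [Ring R] {p f g : R[X]}
    (hf : ∀ n, f.coeff n = if Odd n then p.coeff n else 0)
    (hg : ∀ n, g.coeff n = if Even n then -p.coeff n else 0) :
    p = f - g := by
  ext n
  rw [coeff_sub, hf, hg]
  rcases Nat.even_or_odd n with hn | hn
  · simp [hn, Nat.not_odd_iff_even.2 hn]
  · simp [hn, Nat.not_even_iff_odd.2 hn]

/-- Halving is injective on exponents of a fixed parity. -/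
theorem Polynomial.card_support_le_of_forall_mem_support {R : Type*} [Semiring R] {q : R[X]}
    {B r : ℕ} (hq : ∀ n ∈ q.support, n < 2 * B ∧ n % 2 = r) :
    #q.support ≤ B :=
  calc #q.support ≤ #(range B) :=
        card_le_card_of_injOn (· / 2)
          (fun n hn => by have := hq n hn; simp only [coe_range, Set.mem_Iio]; omega)
          (fun a ha b hb hab => by have := hq a ha; have := hq b hb; simp only at hab; omega)
    _ = B := card_range B

theorem stmt13_general (B : ℕ) (hB : 1 ≤ B) (ω : ℝ)
    (h f₁ f₂ : ℝ[X])
    (hh : h = ∏ i ∈ range (2 * B - 1), (X - C (ω ^ i)))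
    (hf₁ : ∀ n, f₁.coeff n = if Odd n then h.coeff n else 0)
    (hf₂ : ∀ n, f₂.coeff n = if Even n then -(h.coeff n) else 0) :
    h = f₁ - f₂ ∧
    f₁.support.card ≤ B ∧
    f₂.support.card ≤ B ∧
    ∀ i : ℕ, i ≤ 2 * B - 2 → f₁.eval (ω ^ i) = f₂.eval (ω ^ i) := by
  have hdeg : h.natDegree < 2 * B := by
    rw [hh]
    refine (natDegree_prod_le _ _).trans_lt ?_
    simp only [natDegree_X_sub_C, sum_const, card_range, smul_eq_mul, mul_one]
    omega
  have hlt : ∀ n ∈ h.support, n < 2 * B := fun n hn => (le_natDegree_of_mem_supp n hn).trans_lt hdeg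
  have heq : h = f₁ - f₂ := eq_sub_of_coeff_eq_odd_even hf₁ hf₂
  refine ⟨heq, card_support_le_of_forall_mem_support (r := 1) fun n hn => ?_,
    card_support_le_of_forall_mem_support (r := 0) fun n hn => ?_, fun i hi => ?_⟩
  · rw [mem_support_iff, hf₁, ite_ne_right_iff] at hn
    exact ⟨hlt n (mem_support_iff.2 hn.2), Nat.odd_iff.1 hn.1⟩
  · rw [mem_support_iff, hf₂, ite_ne_right_iff, neg_ne_zero] at hn
    exact ⟨hlt n (mem_support_iff.2 hn.2), Nat.even_iff.1 hn.1⟩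
  · have hroot : h.IsRoot (ω ^ i) :=
      hh ▸ (isRoot_prod _ _ _).2 ⟨i, mem_range.2 (by omega), root_X_sub_C.2 rfl⟩
    rw [← sub_eq_zero, ← eval_sub, ← heq]
    exact hroot

/-- With `h = Π_{i=0}^{2B-2} (x - ω^i)`, the odd part `f¹` and the negated even
part `f²` of `h` satisfy `h = f¹ - f²`, each has at most `B` terms, and
`f¹(ω^i) = f²(ω^i)` for `i = 0, …, 2B-2`. -/
theorem stmt13 (B : ℕ) (hB : 1 ≤ B) (ω : ℝ) (hω : 0 < ω) (hω1 : ω ≠ 1)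
    (h f₁ f₂ : ℝ[X])
    (hh : h = ∏ i ∈ range (2 * B - 1), (X - C (ω ^ i)))
    (hf₁ : ∀ n, f₁.coeff n = if Odd n then h.coeff n else 0)
    (hf₂ : ∀ n, f₂.coeff n = if Even n then -(h.coeff n) else 0) :
    h = f₁ - f₂ ∧
    f₁.support.card ≤ B ∧
    f₂.support.card ≤ B ∧
    ∀ i : ℕ, i ≤ 2 * B - 2 → f₁.eval (ω ^ i) = f₂.eval (ω ^ i) :=
  stmt13_general B hB ω h f₁ f₂ hh hf₁ hf₂
end

section
/- Let B ≥ 1 and ω > 0, ω ≠ 1, and h(x) = Π_{i=0}^{2B−2}(x − ω^i). Then h has exactly 2B nonzero terms, i.e., h is a dense polynomial of degree 2B − 1 with no vanishing coefficient. -/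
/-!
By Vieta, the coefficient of `x^k` in `∏ (x - r)` over a multiset of `n` roots is
`(-1)^(n-k) e_{n-k}(roots)`. When all roots are positive, every elementary symmetric
function `e_m` with `m ≤ n` is a nonempty sum of positive products, so no coefficient of
degree `≤ n` vanishes and the support is all of `{0, …, n}`.
-/

open Polynomial Finset

namespace Multiset

variable {R : Type*} [CommSemiring R] [PartialOrder R] [IsStrictOrderedRing R]

theorem esymm_pos {s : Multiset R} (hs : ∀ x ∈ s, 0 < x) {m : ℕ} (hm : m ≤ card s) :
    0 < s.esymm m := by
  obtain ⟨t, ht⟩ : ∃ t, t ∈ s.powersetCard m := by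
    rw [← card_pos_iff_exists_mem, card_powersetCard]
    exact Nat.choose_pos hm
  have prod_pos_of_mem {u} (hu : u ∈ s.powersetCard m) : 0 < u.prod :=
    prod_pos fun x hx => hs x (mem_of_le (mem_powersetCard.mp hu).1 hx)
  calc 0 < t.prod := prod_pos_of_mem ht
    _ ≤ s.esymm m := single_le_sum (forall_mem_map_iff.mpr fun u hu => (prod_pos_of_mem hu).le) _
        (mem_map_of_mem _ ht)

end Multiset

namespace Polynomial

variable {R : Type*} [CommRing R] [PartialOrder R] [IsStrictOrderedRing R]

theorem coeff_multiset_prod_X_sub_C_ne_zero_of_pos {s : Multiset R} (hs : ∀ x ∈ s, 0 < x)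
    {k : ℕ} (hk : k ≤ Multiset.card s) : (s.map fun t => X - C t).prod.coeff k ≠ 0 := by
  rw [Multiset.prod_X_sub_C_coeff s hk, Ne, neg_one_pow_mul_eq_zero_iff]
  exact (Multiset.esymm_pos hs (Nat.sub_le _ _)).ne'

theorem card_support_multiset_prod_X_sub_C_of_pos {s : Multiset R} (hs : ∀ x ∈ s, 0 < x) :
    #(s.map fun t => X - C t).prod.support = Multiset.card s + 1 := by
  suffices (s.map fun t => X - C t).prod.support = range (Multiset.card s + 1) by
    rw [this, card_range]
  refine Subset.antisymm ?_ fun k hk => mem_support_iff.mpr ?_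
  · exact supp_subset_range
      ((natDegree_multiset_prod_X_sub_C_eq_card s).trans_lt (Nat.lt_succ_self _))
  · exact coeff_multiset_prod_X_sub_C_ne_zero_of_pos hs (Nat.lt_succ_iff.mp (mem_range.mp hk))

end Polynomial

theorem stmt14_general (B : ℕ) (hB : 1 ≤ B) (ω : ℝ) (hω : 0 < ω)
    (h : ℝ[X]) (hh : h = ∏ i ∈ range (2 * B - 1), (X - C (ω ^ i))) :
    h.support.card = 2 * B := by
  set s : Multiset ℝ := (range (2 * B - 1)).val.map (ω ^ ·)
  have hs : h = (s.map fun t => X - C t).prod := by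
    rw [hh, prod_eq_multiset_prod, Multiset.map_map]
    rfl
  have hpos : ∀ x ∈ s, 0 < x := by
    simp only [s, Multiset.mem_map]
    rintro _ ⟨i, -, rfl⟩
    positivity
  rw [hs, card_support_multiset_prod_X_sub_C_of_pos hpos, Multiset.card_map, card_val, card_range]
  omega

/-- The polynomial `h = Π_{i=0}^{2B-2} (x - ω^i)` (`ω > 0`, `ω ≠ 1`) is dense: it
has exactly `2B` nonzero terms. -/
theorem stmt14 (B : ℕ) (hB : 1 ≤ B) (ω : ℝ) (hω : 0 < ω) (hω1 : ω ≠ 1)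
    (h : ℝ[X]) (hh : h = ∏ i ∈ range (2 * B - 1), (X - C (ω ^ i))) :
    h.support.card = 2 * B :=
  stmt14_general B hB ω hω h hh
end

section
/- Let t ≥ 1, E ≥ 0, m = 2t(2E+1) (assuming 2t divides m and m ≥ 2t(2E+1) − 1), and let ω ∈ ℂ be a primitive m-th root of unity. Define f₁(x) = (1/t) Σ_{j=0}^{t−1} T_{2j·m/(2t)}(x) and f₂(x) = −(1/t) Σ_{j=0}^{t−1} T_{(2j+1)·m/(2t)}(x). Then for every integer i with i ≡ 0 (mod 2t) we have f₁((ω^i + ω^{−i})/2) = 1 and f₂((ω^i + ω^{−i})/2) = −1, and for every integer i with i mod 2t ≠ 0 we have f₁((ω^i + ω^{−i})/2) = f₂((ω^i + ω^{−i})/2). -/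
open Polynomial Finset

lemma cos_aux (w : ℂ) (k : ℤ) :
    Complex.cos ((k : ℂ) * (-Complex.I * w)) = (Complex.exp w ^ k + Complex.exp w ^ (-k)) / 2 := by
  have h1 : (k : ℂ) * (-Complex.I * w) * Complex.I = (k : ℂ) * w := by
    have h := Complex.I_mul_I
    linear_combination (-(k : ℂ) * w) * h
  have h2 : -((k : ℂ) * (-Complex.I * w)) * Complex.I = ((-k : ℤ) : ℂ) * w := by
    have h := Complex.I_mul_I
    push_cast
    linear_combination ((k : ℂ) * w) * h
  rw [Complex.cos, h1, h2]
  rw [show ((k : ℂ) * w) = ((k : ℤ) : ℂ) * w by norm_cast]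
  rw [Complex.exp_int_mul, Complex.exp_int_mul]

lemma T_eval_half (z : ℂ) (hz : z ≠ 0) (n : ℤ) :
    (Chebyshev.T ℂ n).eval ((z + z⁻¹) / 2) = (z ^ n + z ^ (-n)) / 2 := by
  obtain ⟨w, hw⟩ : z ∈ Set.range Complex.exp := by rw [Complex.range_exp]; exact hz
  have hx : (z + z⁻¹) / 2 = Complex.cos (-Complex.I * w) := by
    have := cos_aux w 1
    simp only [Int.cast_one, one_mul] at this
    rw [this, hw, zpow_one, zpow_neg, zpow_one]
  rw [hx, Polynomial.Chebyshev.T_complex_cos, cos_aux, hw]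

/-- Two distinct `t`-sparse Chebyshev-basis polynomials `f₁, f₂` built from a
primitive `m`-th root of unity (`m = 2t(2E+1)`) satisfy: at the points
`(ω^i + ω^{-i})/2`, `f₁` takes value `1` and `f₂` value `-1` when `2t ∣ i`, and
`f₁, f₂` agree whenever `2t ∤ i`. -/
theorem stmt15 (t E m : ℕ) (ht : 1 ≤ t) (hm : m = 2 * t * (2 * E + 1))
    (ω : ℂ) (hω : IsPrimitiveRoot ω m)
    (f₁ f₂ : ℂ[X])
    (hf₁ : f₁ = C ((t : ℂ)⁻¹) *
      ∑ j ∈ range t, Chebyshev.T ℂ ((2 * j * (m / (2 * t)) : ℕ)))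
    (hf₂ : f₂ = -C ((t : ℂ)⁻¹) *
      ∑ j ∈ range t, Chebyshev.T ℂ (((2 * j + 1) * (m / (2 * t)) : ℕ))) :
    ∀ i : ℤ,
      (i % (2 * t) = 0 →
        f₁.eval ((ω ^ i + ω ^ (-i)) / 2) = 1 ∧
        f₂.eval ((ω ^ i + ω ^ (-i)) / 2) = -1) ∧
      (i % (2 * t) ≠ 0 →
        f₁.eval ((ω ^ i + ω ^ (-i)) / 2) = f₂.eval ((ω ^ i + ω ^ (-i)) / 2)) := by
  intro i
  have ht0 : (t : ℂ) ≠ 0 := Nat.cast_ne_zero.mpr (by omega)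
  set s : ℕ := m / (2 * t) with hs
  have hsE : s = 2 * E + 1 := by
    rw [hs, hm, Nat.mul_div_cancel_left _ (by omega : 0 < 2 * t)]
  have hm0 : m ≠ 0 := by rw [hm]; positivity
  have hω0 : ω ≠ 0 := hω.ne_zero hm0
  set z : ℂ := ω ^ i with hzdef
  have hz0 : z ≠ 0 := zpow_ne_zero _ hω0
  have hzinv : ω ^ (-i) = z⁻¹ := zpow_neg ω i
  set u : ℂ := ω ^ ((s : ℤ) * i) with hudef
  set v : ℂ := ω ^ (2 * (s : ℤ) * i) with hvdef
  have hu0 : u ≠ 0 := zpow_ne_zero _ hω0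
  have hmts : (m : ℤ) = 2 * (t : ℤ) * (s : ℤ) := by rw [hm, hsE]; push_cast; ring
  have hone : ∀ k : ℤ, ω ^ k = 1 ↔ (m : ℤ) ∣ k := fun k => hω.zpow_eq_one_iff_dvd k
  -- v ^ t = 1
  have hvt : v ^ t = 1 := by
    rw [hvdef, ← zpow_natCast, ← zpow_mul, hone]
    exact ⟨i, by rw [hmts]; ring⟩
  have hvit : (v⁻¹) ^ t = 1 := by rw [inv_pow, hvt, inv_one]
  have hpow : ∀ k : ℤ, z ^ k = ω ^ (i * k) := fun k => (zpow_mul ω i k).symm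
  -- per-term values
  have a1 : ∀ j : ℕ, z ^ ((2 * j * s : ℕ) : ℤ) = v ^ j := by
    intro j
    have e : i * ((2 * j * s : ℕ) : ℤ) = (2 * (s : ℤ) * i) * (j : ℤ) := by push_cast; ring
    rw [hpow, e, zpow_mul, zpow_natCast]
  have a2 : ∀ j : ℕ, z ^ (((2 * j + 1) * s : ℕ) : ℤ) = u * v ^ j := by
    intro j
    have e : i * (((2 * j + 1) * s : ℕ) : ℤ) = (s : ℤ) * i + (2 * (s : ℤ) * i) * (j : ℤ) := by
      push_cast; ring
    rw [hpow, e, zpow_add₀ hω0, zpow_mul ω (2 * (s : ℤ) * i) (j : ℤ), zpow_natCast]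
  have hx : (ω ^ i + ω ^ (-i)) / 2 = (z + z⁻¹) / 2 := by rw [hzinv]
  -- evaluate f₁
  have ef₁ : f₁.eval ((ω ^ i + ω ^ (-i)) / 2)
      = (t : ℂ)⁻¹ * ∑ j ∈ range t, (v ^ j + (v⁻¹) ^ j) / 2 := by
    rw [hx, hf₁, eval_mul, eval_C, eval_finset_sum]
    congr 1
    refine Finset.sum_congr rfl fun j _ => ?_
    rw [T_eval_half z hz0, a1, zpow_neg, a1, inv_pow]
  have ef₂ : f₂.eval ((ω ^ i + ω ^ (-i)) / 2)
      = -((t : ℂ)⁻¹ * ∑ j ∈ range t, (u * v ^ j + u⁻¹ * (v⁻¹) ^ j) / 2) := by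
    rw [hx, hf₂, eval_mul, eval_neg, eval_C, eval_finset_sum, neg_mul]
    congr 2
    refine Finset.sum_congr rfl fun j _ => ?_
    rw [T_eval_half z hz0, a2, zpow_neg, a2, mul_inv, inv_pow]
  have hmod : i % (2 * t) = 0 ↔ (2 * (t : ℤ)) ∣ i := by
    constructor
    · intro h; exact Int.dvd_of_emod_eq_zero (by exact_mod_cast h)
    · intro h; exact_mod_cast Int.emod_eq_zero_of_dvd h
  have hs0 : (s : ℤ) ≠ 0 := by rw [hsE]; push_cast; omega
  have hu1_iff : u = 1 ↔ (2 * (t : ℤ)) ∣ i := by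
    rw [hudef, hone]
    constructor
    · rintro ⟨c, hc⟩
      refine ⟨c, ?_⟩
      have : (s : ℤ) * i = (s : ℤ) * (2 * (t : ℤ) * c) := by rw [hc, hmts]; ring
      exact mul_left_cancel₀ hs0 this
    · rintro ⟨c, hc⟩; exact ⟨c, by rw [hc, hmts]; ring⟩
  have hv1_iff : v = 1 ↔ ((t : ℤ)) ∣ i := by
    rw [hvdef, hone]
    constructor
    · rintro ⟨c, hc⟩
      refine ⟨c, ?_⟩
      have : (2 * (s : ℤ)) * i = (2 * (s : ℤ)) * ((t : ℤ) * c) := by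
        rw [show (2 * (s:ℤ)) * i = 2 * (s:ℤ) * i by ring, hc, hmts]; ring
      exact mul_left_cancel₀ (mul_ne_zero two_ne_zero hs0 : (2 * (s : ℤ)) ≠ 0) this
    · rintro ⟨c, hc⟩; exact ⟨c, by rw [hc, hmts]; ring⟩
  constructor
  · intro h0
    have hdvd : (2 * (t : ℤ)) ∣ i := hmod.mp h0
    have hu1 : u = 1 := hu1_iff.mpr hdvd
    have hv1 : v = 1 := hv1_iff.mpr (dvd_trans ⟨2, by ring⟩ hdvd)
    constructor
    · rw [ef₁, hv1]
      simp [Finset.sum_const, inv_mul_cancel₀ ht0]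
    · rw [ef₂, hu1, hv1]
      simp [Finset.sum_const, inv_mul_cancel₀ ht0]
  · intro hne
    have hndvd : ¬ (2 * (t : ℤ)) ∣ i := fun h => hne (hmod.mpr h)
    by_cases hti : ((t : ℤ)) ∣ i
    · -- v = 1, u = -1
      have hv1 : v = 1 := hv1_iff.mpr hti
      have hu2 : u ^ 2 = 1 := by
        rw [hudef, ← zpow_natCast, ← zpow_mul]
        rw [show (s : ℤ) * i * (2 : ℕ) = 2 * (s : ℤ) * i by push_cast; ring]
        rw [← hvdef, hv1]
      have hu1 : u ≠ 1 := fun h => hndvd (hu1_iff.mp h)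
      have hum : u = -1 := by
        have hfac : (u - 1) * (u + 1) = 0 := by linear_combination hu2
        rcases mul_eq_zero.mp hfac with h | h
        · exact absurd (sub_eq_zero.mp h) hu1
        · exact eq_neg_of_add_eq_zero_left h
      rw [ef₁, ef₂, hv1, hum]
      simp [Finset.sum_const, inv_mul_cancel₀ ht0]
    · -- v ≠ 1
      have hv1 : v ≠ 1 := fun h => hti (hv1_iff.mp h)
      have hvi1 : v⁻¹ ≠ 1 := fun h => hv1 (by rwa [inv_eq_one] at h)
      have g1 : ∑ j ∈ range t, v ^ j = 0 := by
        rw [geom_sum_eq hv1, hvt, sub_self, zero_div]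
      have g2 : ∑ j ∈ range t, (v⁻¹) ^ j = 0 := by
        rw [geom_sum_eq hvi1, hvit, sub_self, zero_div]
      rw [ef₁, ef₂]
      rw [show ∀ S : Finset ℕ, ∑ j ∈ S, (v ^ j + (v⁻¹) ^ j) / 2
          = ((∑ j ∈ S, v ^ j) + ∑ j ∈ S, (v⁻¹) ^ j) / 2 from fun S => by
        rw [← Finset.sum_div, Finset.sum_add_distrib]]
      rw [show ∀ S : Finset ℕ, ∑ j ∈ S, (u * v ^ j + u⁻¹ * (v⁻¹) ^ j) / 2
          = (u * (∑ j ∈ S, v ^ j) + u⁻¹ * ∑ j ∈ S, (v⁻¹) ^ j) / 2 from fun S => by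
        rw [← Finset.sum_div, Finset.sum_add_distrib, ← Finset.mul_sum, ← Finset.mul_sum]]
      rw [g1, g2]
      simp
end

section
/- Let K be a field, B ≥ 1, and suppose (a_1, …, a_{3B}) is a sequence such that a_i = f(ω^i) for a B-sparse polynomial f with distinct nonzero term values ω^{δ_j}, except at exactly one index ℓ with B+1 ≤ ℓ ≤ 2B where a_ℓ is arbitrary. Replace a_ℓ by a variable α and form the (B+1)×(B+1) Hankel matrix H_{ℓ−B}(α) with entries a_{ℓ−B+i+j} (0 ≤ i,j ≤ B). Then the set of α ∈ K with det H_{ℓ−B}(α) = 0 has at most B+1 elements and contains the correct value f(ω^ℓ). -/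
open Finset

open Polynomial

set_option maxHeartbeats 1000000

lemma det_zero_of_factor {K : Type*} [Field K] {m t : ℕ} (htm : t < m)
    (M : Matrix (Fin m) (Fin m) K) (U : Matrix (Fin m) (Fin t) K)
    (W : Matrix (Fin t) (Fin m) K) (h : M = U * W) : M.det = 0 := by
  by_contra hd
  have hu : IsUnit M := (Matrix.isUnit_iff_isUnit_det M).mpr (isUnit_iff_ne_zero.mpr hd)
  have h1 : M.rank = m := by simpa using Matrix.rank_of_isUnit M hu
  have h2 : M.rank ≤ t := by
    rw [h]
    exact le_trans (Matrix.rank_mul_le_left U W) (by simpa using Matrix.rank_le_card_width U)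
  omega

/-- In a block of `3B` evaluations of a `B`-sparse polynomial `f` with a single
error at position `ℓ` (`B+1 ≤ ℓ ≤ 2B`), replacing the erroneous value by a
variable `α` in the Hankel matrix `H_{ℓ-B}` gives a determinantal equation with
at most `B+1` solutions in `K`, one of which is the true value `f(ω^ℓ)`. -/
theorem stmt17 (K : Type*) [Field K] (B t : ℕ) (hB : 1 ≤ B) (ht : t ≤ B)
    (δ : Fin t → ℕ) (c : Fin t → K) (hc : ∀ j, c j ≠ 0) (ω : K) (hω : ω ≠ 0)
    (hdist : Function.Injective fun j => ω ^ (δ j))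
    (ℓ : ℕ) (hℓ₁ : B + 1 ≤ ℓ) (hℓ₂ : ℓ ≤ 2 * B)
    (a : ℕ → K) (ha : ∀ i, i ≠ ℓ → a i = ∑ j, c j * (ω ^ (δ j)) ^ i) :
    {α : K |
        (Matrix.of fun i j : Fin (B + 1) =>
          if (i : ℕ) + (j : ℕ) = B then α else a (ℓ - B + i + j)).det = 0}.Finite ∧
    {α : K |
        (Matrix.of fun i j : Fin (B + 1) =>
          if (i : ℕ) + (j : ℕ) = B then α else a (ℓ - B + i + j)).det = 0}.ncard
      ≤ B + 1 ∧
    (∑ j, c j * (ω ^ (δ j)) ^ ℓ) ∈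
      {α : K |
        (Matrix.of fun i j : Fin (B + 1) =>
          if (i : ℕ) + (j : ℕ) = B then α else a (ℓ - B + i + j)).det = 0} := by
  classical
  set Mp : Matrix (Fin (B+1)) (Fin (B+1)) K[X] :=
    Matrix.of (fun i j => if (i:ℕ)+(j:ℕ) = B then X else C (a (ℓ - B + i + j))) with hMp
  have heval : ∀ α : K,
      (Matrix.of fun i j : Fin (B + 1) =>
        if (i : ℕ) + (j : ℕ) = B then α else a (ℓ - B + i + j)).det = Mp.det.eval α := by
    intro α
    rw [← Polynomial.coe_evalRingHom, RingHom.map_det]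
    congr 1
    ext i j
    simp [hMp, Matrix.map_apply, apply_ite (eval α)]
  -- the key coefficient
  have hentry_deg : ∀ i j : Fin (B+1), (Mp i j).natDegree ≤ 1 := by
    intro i j
    simp only [hMp, Matrix.of_apply]
    split
    · simp
    · simp
  have hcoeff : Mp.det.coeff (B+1) = Equiv.Perm.sign (Fin.revPerm (n := B+1)) • (1 : K) := by
    rw [Matrix.det_apply, finset_sum_coeff]
    rw [Finset.sum_eq_single (Fin.revPerm (n := B+1))]
    · have hx : ∀ i : Fin (B+1), Mp (Fin.revPerm i) i = X := by
        intro i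
        have h2 := i.2
        simp only [hMp, Matrix.of_apply, Fin.revPerm_apply, Fin.val_rev]
        rw [if_pos (by omega)]
      rw [Finset.prod_congr rfl (fun i _ => hx i), Finset.prod_const, Finset.card_univ,
        Fintype.card_fin, coeff_smul, coeff_X_pow, if_pos rfl]
    · intro σ _ hσ
      obtain ⟨i0, hi0⟩ : ∃ i0, σ i0 ≠ Fin.revPerm i0 := by
        by_contra hcon
        push_neg at hcon
        exact hσ (Equiv.ext hcon)
      rw [coeff_smul]
      have hz : (∏ i, Mp (σ i) i).coeff (B+1) = 0 := by
        apply coeff_eq_zero_of_natDegree_lt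
        have hd0 : (Mp (σ i0) i0).natDegree = 0 := by
          have hne : ¬ ((σ i0 : ℕ) + (i0 : ℕ) = B) := by
            intro hsum
            apply hi0
            have h2 := (σ i0).2
            have h3 := i0.2
            apply Fin.ext
            simp only [Fin.revPerm_apply, Fin.val_rev]
            omega
          simp only [hMp, Matrix.of_apply, if_neg hne]
          exact natDegree_C _
        calc (∏ i, Mp (σ i) i).natDegree ≤ ∑ i, (Mp (σ i) i).natDegree :=
              natDegree_prod_le _ _
          _ < B + 1 := by
              rw [← Finset.add_sum_erase _ _ (Finset.mem_univ i0), hd0, zero_add]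
              have hle : ∑ i ∈ Finset.univ.erase i0, (Mp (σ i) i).natDegree ≤
                  (Finset.univ.erase i0).card * 1 := by
                apply Finset.sum_le_card_nsmul
                intro i _
                exact hentry_deg _ _
              have hcard : (Finset.univ.erase i0).card = B := by
                rw [Finset.card_erase_of_mem (Finset.mem_univ i0), Finset.card_univ,
                  Fintype.card_fin]
                omega
              omega
      rw [hz, smul_zero]
    · intro h
      exact absurd (Finset.mem_univ _) h
  have hsign : (Equiv.Perm.sign (Fin.revPerm (n := B+1)) • (1 : K)) ≠ 0 := by
    rcases Int.units_eq_one_or (Equiv.Perm.sign (Fin.revPerm (n := B+1))) with h | h <;>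
      rw [h] <;> simp
  have hP0 : Mp.det ≠ 0 := fun h => hsign (by rw [← hcoeff, h, coeff_zero])
  have hdeg : Mp.det.natDegree ≤ B + 1 := by
    rw [Matrix.det_apply]
    refine natDegree_sum_le_of_forall_le _ _ fun σ _ => ?_
    have hsm : (Equiv.Perm.sign σ • ∏ i, Mp (σ i) i).natDegree = (∏ i, Mp (σ i) i).natDegree := by
      rcases Int.units_eq_one_or (Equiv.Perm.sign σ) with h | h <;> rw [h] <;>
        simp [Units.smul_def, neg_smul, one_smul]
    rw [hsm]
    refine le_trans (natDegree_prod_le _ _) ?_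
    have := Finset.sum_le_card_nsmul Finset.univ (fun i => (Mp (σ i) i).natDegree) 1
      (fun i _ => hentry_deg _ _)
    simpa using this
  have hSeq : {α : K |
      (Matrix.of fun i j : Fin (B + 1) =>
        if (i : ℕ) + (j : ℕ) = B then α else a (ℓ - B + i + j)).det = 0}
      = {α : K | Mp.det.IsRoot α} := by
    ext α
    simp only [Set.mem_setOf_eq, heval α, IsRoot.def]
  refine ⟨?_, ?_, ?_⟩
  · rw [hSeq]; exact Polynomial.finite_setOf_isRoot hP0
  · rw [hSeq]
    have hroots : {α : K | Mp.det.IsRoot α} = ↑Mp.det.roots.toFinset := by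
      ext α
      simp [Polynomial.mem_roots, hP0]
    rw [hroots, Set.ncard_coe_finset]
    exact le_trans (Multiset.toFinset_card_le _) (le_trans (Polynomial.card_roots' _) hdeg)
  · show (Matrix.of fun i j : Fin (B + 1) =>
        if (i : ℕ) + (j : ℕ) = B then (∑ j, c j * (ω ^ (δ j)) ^ ℓ)
        else a (ℓ - B + i + j)).det = 0
    apply det_zero_of_factor (by omega : t < B + 1) _
      (Matrix.of fun (i : Fin (B+1)) (k : Fin t) => c k * (ω ^ δ k) ^ (ℓ - B + (i:ℕ)))
      (Matrix.of fun (k : Fin t) (j : Fin (B+1)) => (ω ^ δ k) ^ (j:ℕ))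
    ext i j
    simp only [Matrix.mul_apply, Matrix.of_apply]
    have hkey : ∀ k : Fin t,
        c k * (ω ^ δ k) ^ (ℓ - B + (i:ℕ)) * (ω ^ δ k) ^ (j:ℕ)
          = c k * (ω ^ δ k) ^ (ℓ - B + (i:ℕ) + (j:ℕ)) := by
      intro k
      rw [mul_assoc, ← pow_add]
    rw [Finset.sum_congr rfl fun k _ => hkey k]
    split
    case isTrue h =>
      have : ℓ - B + (i:ℕ) + (j:ℕ) = ℓ := by omega
      rw [this]
    case isFalse h =>
      rw [ha _ (by omega)]
end
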